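/- arXiv:1412.5081 — 5 statements merged into one kernel-verified Lean document; each statement's English description precedes it below -/
import Mathlib

section
/- The partition function of the one-dimensional Ising model on a cycle of N vertices equals λ₊^N + λ₋^N, where λ± = e^β(cosh(B) ± √(sinh²(B) + e^{-4β})) are the eigenvalues of the 2×2 transfer matrix D with entries D_{σ,τ} = exp(βστ + (B/2)(σ+τ)) for σ,τ ∈ {-1,+1}. -/
open Real Finset

/-- Spin value of a Boolean configuration entry: `true ↦ +1`, `false ↦ -1`. -/
noncomputable def spin (b : Bool) : ℝ := if b then 1 else -1

/-- The larger transfer-matrix eigenvalue `λ₊(β,B)`. -/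
noncomputable def lamP (β B : ℝ) : ℝ :=
  Real.exp β * (Real.cosh B + Real.sqrt (Real.sinh B ^ 2 + Real.exp (-4 * β)))

/-- The smaller transfer-matrix eigenvalue `λ₋(β,B)`. -/
noncomputable def lamM (β B : ℝ) : ℝ :=
  Real.exp β * (Real.cosh B - Real.sqrt (Real.sinh B ^ 2 + Real.exp (-4 * β)))

/-- Spin values indexing the 2×2 transfer matrix: `0 ↦ +1`, `1 ↦ -1`. -/
noncomputable def sval : Fin 2 → ℝ := ![1, -1]

/-- The 2×2 transfer matrix `D` with `D_{σ,τ} = exp(βστ + (B/2)(σ+τ))`. -/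
noncomputable def transferMatrix (β B : ℝ) : Matrix (Fin 2) (Fin 2) ℝ :=
  Matrix.of fun i j => Real.exp (β * sval i * sval j + B / 2 * (sval i + sval j))

section Chain

variable {ι : Type*} [Fintype ι] [DecidableEq ι]

/-- Product of matrix entries along the path `a, f 0, ..., f (n-1), b`. -/
def chainProd (A : Matrix ι ι ℝ) : ∀ n, ι → (Fin n → ι) → ι → ℝ
  | 0, a, _, b => A a b
  | n+1, a, f, b => A a (f 0) * chainProd A n (f 0) (Fin.tail f) b

lemma sum_chainProd (A : Matrix ι ι ℝ) :
    ∀ n (a b : ι), (∑ f : Fin n → ι, chainProd A n a f b) = (A ^ (n+1)) a b := by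
  intro n
  induction n with
  | zero => intro a b; simp [chainProd]
  | succ n ih =>
      intro a b
      rw [← Fintype.sum_equiv (Fin.consEquiv (fun _ : Fin (n+1) => ι))
        (fun p => chainProd A (n+1) a (Fin.cons p.1 p.2) b) _ (fun p => rfl)]
      rw [Fintype.sum_prod_type]
      simp only [chainProd, Fin.cons_zero, Fin.tail_cons]
      rw [show (n + 1 + 1) = (n + 1) + 1 from rfl, pow_succ', Matrix.mul_apply]
      exact Finset.sum_congr rfl fun c _ => by rw [← Finset.mul_sum, ih]

lemma chainProd_eq (A : Matrix ι ι ℝ) :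
    ∀ n (g : Fin (n+1) → ι) (b : ι),
      (∏ k : Fin n, A (g k.castSucc) (g k.succ)) * A (g (Fin.last n)) b
        = chainProd A n (g 0) (Fin.tail g) b := by
  intro n
  induction n with
  | zero => intro g b; simp [chainProd]
  | succ n ih =>
      intro g b
      have h := ih (fun k => g k.succ) b
      simp only [Fin.tail_def] at h
      simp only [chainProd, Fin.tail_def]
      rw [Fin.prod_univ_succ, Fin.castSucc_zero, mul_assoc, ← h]
      simp only [Fin.succ_castSucc, Fin.succ_last]

lemma trace_pow_eq_sum_cycles (A : Matrix ι ι ℝ) (n : ℕ) :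
    (A ^ (n+1)).trace = ∑ σ : Fin (n+1) → ι, ∏ i : Fin (n+1), A (σ i) (σ (i+1)) := by
  rw [Matrix.trace]
  have h1 : ∀ σ : Fin (n+1) → ι,
      (∏ i : Fin (n+1), A (σ i) (σ (i+1))) = chainProd A n (σ 0) (Fin.tail σ) (σ 0) := by
    intro σ
    rw [← chainProd_eq, Fin.prod_univ_castSucc]
    congr 1
    · exact Finset.prod_congr rfl fun k _ => by rw [Fin.coeSucc_eq_succ]
    · rw [Fin.last_add_one]
  rw [Finset.sum_congr rfl fun σ _ => h1 σ]
  rw [← Fintype.sum_equiv (Fin.consEquiv (fun _ : Fin (n+1) => ι))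
    (fun p => chainProd A n p.1 p.2 p.1)
    (fun σ => chainProd A n (σ 0) (Fin.tail σ) (σ 0))
    (fun p => by simp [Fin.consEquiv])]
  rw [Fintype.sum_prod_type]
  simp only [Matrix.diag_apply]
  exact Finset.sum_congr rfl fun a _ => by rw [sum_chainProd]

end Chain

lemma sq_sqrt_term (β B : ℝ) :
    Real.sqrt (Real.sinh B ^ 2 + Real.exp (-4 * β)) ^ 2
      = Real.sinh B ^ 2 + Real.exp (-4 * β) :=
  Real.sq_sqrt (by positivity)

lemma trace_transfer (β B : ℝ) :
    (transferMatrix β B).trace = lamP β B + lamM β B := by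
  simp only [Matrix.trace_fin_two, transferMatrix, Matrix.of_apply, sval,
    Matrix.cons_val_zero, Matrix.cons_val_one, Matrix.head_cons, lamP, lamM]
  rw [show β * 1 * 1 + B / 2 * (1 + 1) = β + B by ring,
    show β * -1 * -1 + B / 2 * (-1 + -1) = β + -B by ring,
    Real.exp_add, Real.exp_add, Real.cosh_eq]
  ring

lemma det_transfer (β B : ℝ) :
    (transferMatrix β B).det = lamP β B * lamM β B := by
  have hs := sq_sqrt_term β B
  have hcs : Real.cosh B ^ 2 = Real.sinh B ^ 2 + 1 := Real.cosh_sq B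
  have hBB : Real.exp B * Real.exp (-B) = 1 := by rw [← Real.exp_add]; simp
  have h4 : Real.exp (-4 * β / 2) * Real.exp (-4 * β / 2) = Real.exp (-4 * β) := by
    rw [← Real.exp_add]; ring_nf
  simp only [Matrix.det_fin_two, transferMatrix, Matrix.of_apply, sval,
    Matrix.cons_val_zero, Matrix.cons_val_one, Matrix.head_cons, lamP, lamM]
  rw [show β * 1 * 1 + B / 2 * (1 + 1) = β + B by ring,
    show β * -1 * -1 + B / 2 * (-1 + -1) = β + -B by ring,
    show β * 1 * -1 + B / 2 * (1 + -1) = β + -4 * β / 2 by ring,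
    show β * -1 * 1 + B / 2 * (-1 + 1) = β + -4 * β / 2 by ring]
  simp only [Real.exp_add]
  linear_combination (Real.exp β * Real.exp β) * hBB
    - (Real.exp β * Real.exp β) * h4
    + (Real.exp β * Real.exp β) * hs
    - (Real.exp β * Real.exp β) * hcs

lemma trace_pow_transfer (β B : ℝ) (n : ℕ) :
    (transferMatrix β B ^ n).trace = lamP β B ^ n + lamM β B ^ n := by
  have ht := trace_transfer β B
  have hd := det_transfer β B
  have hch : transferMatrix β B ^ 2
      = (transferMatrix β B).trace • transferMatrix β B
        - (transferMatrix β B).det • (1 : Matrix (Fin 2) (Fin 2) ℝ) := by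
    ext i j
    fin_cases i <;> fin_cases j <;>
      simp [pow_two, Matrix.mul_apply, Fin.sum_univ_two, Matrix.trace_fin_two,
        Matrix.det_fin_two, Matrix.sub_apply, Matrix.smul_apply, Matrix.one_apply,
        smul_eq_mul] <;> ring
  induction n using Nat.twoStepInduction with
  | zero => norm_num [Matrix.trace_one]
  | one => simpa using ht
  | more n ih1 ih2 =>
      have e : transferMatrix β B ^ (n + 2)
          = (lamP β B + lamM β B) • transferMatrix β B ^ (n + 1)
            - (lamP β B * lamM β B) • transferMatrix β B ^ n := by
        calc transferMatrix β B ^ (n + 2)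
            = transferMatrix β B ^ n * transferMatrix β B ^ 2 := by rw [← pow_add]
          _ = _ := by
              rw [hch, ht, hd, Matrix.mul_sub, Matrix.mul_smul, Matrix.mul_smul,
                mul_one, ← pow_succ]
      rw [e, Matrix.trace_sub, Matrix.trace_smul, Matrix.trace_smul, ih1, ih2,
        smul_eq_mul, smul_eq_mul]
      ring

set_option maxHeartbeats 1600000 in
/-- The partition function of the one-dimensional Ising model with periodic boundary
conditions on `N` vertices equals `λ₊^N + λ₋^N`, where `λ±` are the eigenvalues of
the transfer matrix `D`. -/
theorem ising_cycle_partition (β B : ℝ) (hβ : 0 ≤ β) (N : ℕ) (hN : 1 ≤ N) :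
    Matrix.det (transferMatrix β B - lamP β B • (1 : Matrix (Fin 2) (Fin 2) ℝ)) = 0 ∧
    Matrix.det (transferMatrix β B - lamM β B • (1 : Matrix (Fin 2) (Fin 2) ℝ)) = 0 ∧
    ∑ σ : Fin N → Bool,
        Real.exp (β * ∑ i : Fin N, spin (σ i) * spin (σ ⟨((i : ℕ) + 1) % N, Nat.mod_lt _ (by omega)⟩)
          + B * ∑ i : Fin N, spin (σ i))
      = lamP β B ^ N + lamM β B ^ N := by
  have ht := trace_transfer β B
  have hd := det_transfer β B
  have hdet : ∀ l : ℝ, (transferMatrix β B - l • (1 : Matrix (Fin 2) (Fin 2) ℝ)).det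
      = (transferMatrix β B).det - l * (transferMatrix β B).trace + l ^ 2 := by
    intro l
    simp [Matrix.det_fin_two, Matrix.trace_fin_two, Matrix.sub_apply, Matrix.smul_apply,
      Matrix.one_apply, smul_eq_mul]
    ring
  refine ⟨by rw [hdet, hd, ht]; ring, by rw [hdet, hd, ht]; ring, ?_⟩
  obtain ⟨n, rfl⟩ : ∃ n, N = n + 1 := ⟨N - 1, by omega⟩
  have hidx : ∀ (i : Fin (n+1)) (h : ((i : ℕ) + 1) % (n+1) < n+1),
      (⟨((i : ℕ) + 1) % (n+1), h⟩ : Fin (n+1)) = i + 1 := by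
    intro i h
    apply Fin.ext
    simp only [Fin.add_def, Fin.val_one']
    conv_lhs => rw [Nat.add_mod]
    rw [Nat.mod_eq_of_lt i.isLt]
  simp only [hidx]
  set e : Bool → Fin 2 := fun b => if b then 0 else 1 with he
  have hsv : ∀ b, sval (e b) = spin b := by
    intro b; cases b <;> simp [he, sval, spin]
  have hpt : ∀ σ : Fin (n+1) → Bool,
      Real.exp (β * ∑ i : Fin (n+1), spin (σ i) * spin (σ (i+1))
          + B * ∑ i : Fin (n+1), spin (σ i))
        = ∏ i : Fin (n+1), transferMatrix β B (e (σ i)) (e (σ (i+1))) := by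
    intro σ
    have hshift : ∑ i : Fin (n+1), spin (σ (i+1)) = ∑ i : Fin (n+1), spin (σ i) :=
      Fintype.sum_equiv (Equiv.addRight 1) _ _ (fun i => rfl)
    have harg : β * ∑ i : Fin (n+1), spin (σ i) * spin (σ (i+1))
          + B * ∑ i : Fin (n+1), spin (σ i)
        = ∑ i : Fin (n+1), (β * (spin (σ i) * spin (σ (i+1)))
            + B / 2 * (spin (σ i) + spin (σ (i+1)))) := by
      rw [Finset.sum_add_distrib, ← Finset.mul_sum, ← Finset.mul_sum,
        Finset.sum_add_distrib, hshift]
      ring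
    rw [harg, Real.exp_sum]
    exact Finset.prod_congr rfl fun i _ => by
      simp only [transferMatrix, Matrix.of_apply, hsv]
      congr 1
      ring
  rw [Finset.sum_congr rfl fun σ _ => hpt σ]
  have hebij : Function.Bijective e := by decide
  have hbij : Function.Bijective fun (σ : Fin (n+1) → Bool) (i : Fin (n+1)) => e (σ i) := by
    constructor
    · intro a b hab
      funext i
      exact hebij.1 (congrFun hab i)
    · intro τ
      obtain ⟨inv, hinv⟩ : ∃ inv : Fin 2 → Bool, ∀ j, e (inv j) = j :=
        ⟨fun j => (Equiv.ofBijective e hebij).symm j,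
          fun j => (Equiv.ofBijective e hebij).apply_symm_apply j⟩
      exact ⟨fun i => inv (τ i), funext fun i => hinv (τ i)⟩
  calc ∑ σ : Fin (n+1) → Bool, ∏ i : Fin (n+1), transferMatrix β B (e (σ i)) (e (σ (i+1)))
      = ∑ τ : Fin (n+1) → Fin 2, ∏ i : Fin (n+1), transferMatrix β B (τ i) (τ (i+1)) :=
        Fintype.sum_bijective _ hbij _ _ (fun σ => rfl)
    _ = (transferMatrix β B ^ (n+1)).trace := (trace_pow_eq_sum_cycles _ n).symm
    _ = _ := trace_pow_transfer β B (n+1)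
end

section
/- Let (f_n) be a sequence of convex functions on an open interval A ⊆ ℝ converging pointwise to f on A, and let t_n ∈ A converge to t₀ ∈ A. If each f_n is differentiable at t_n and f is differentiable at t₀, then f_n'(t_n) → f'(t₀). -/
/-!
Convexity squeezes `f' n` between chord slopes of `f n` on either side of `t n`: for
`u < v < t n` one has `slope (f n) u v ≤ f' n`, and `f' n ≤ slope (f n) u v` for `t n < u < v`.
Chord slopes pass to the pointwise limit `g`, and `g` has chords just left and right of `t₀`
with slope close to `g'`: first pick `u` with `slope g u t₀` close to `g'`, then, by continuity
of `g` at `t₀`, some `v` between `u` and `t₀` with `slope g u v` still close to `g'`.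
-/

open Filter Set Topology

theorem ConvexOn.slope_le_of_hasDerivAt_of_lt {S : Set ℝ} {f : ℝ → ℝ} {f' u v x : ℝ}
    (hfc : ConvexOn ℝ S f) (hu : u ∈ S) (hx : x ∈ S) (huv : u < v) (hvx : v < x)
    (hf : HasDerivAt f f' x) : slope f u v ≤ f' :=
  calc slope f u v ≤ slope f v x := by
        simpa only [slope_def_field] using hfc.slope_mono_adjacent hu hx huv hvx
    _ ≤ f' :=
        hfc.slope_le_of_hasDerivAt (hfc.1.ordConnected.out hu hx ⟨huv.le, hvx.le⟩) hx hvx hf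

theorem ConvexOn.le_slope_of_hasDerivAt_of_lt {S : Set ℝ} {f : ℝ → ℝ} {f' x u v : ℝ}
    (hfc : ConvexOn ℝ S f) (hx : x ∈ S) (hv : v ∈ S) (hxu : x < u) (huv : u < v)
    (hf : HasDerivAt f f' x) : f' ≤ slope f u v :=
  calc f' ≤ slope f x u :=
        hfc.le_slope_of_hasDerivAt hx (hfc.1.ordConnected.out hx hv ⟨hxu.le, huv.le⟩) hxu hf
    _ ≤ slope f u v := by
        simpa only [slope_def_field] using hfc.slope_mono_adjacent hx hv hxu huv

theorem continuousAt_slope {g : ℝ → ℝ} {u t₀ : ℝ} (hg : ContinuousAt g t₀) (hu : u ≠ t₀) :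
    ContinuousAt (slope g u) t₀ := by
  simp only [slope_fun_def_field]
  exact (hg.sub continuousAt_const).div (continuousAt_id.sub continuousAt_const)
    (sub_ne_zero.2 hu.symm)

theorem HasDerivAt.exists_lt_slope_of_lt_left {g : ℝ → ℝ} {g' t₀ c l : ℝ}
    (hg : HasDerivAt g g' t₀) (hc : c < g') (hl : l < t₀) :
    ∃ u v, l < u ∧ u < v ∧ v < t₀ ∧ c < slope g u v := by
  obtain ⟨u, hcu, hu⟩ : ∃ u, c < slope g t₀ u ∧ u ∈ Ioo l t₀ :=
    (((hasDerivAt_iff_tendsto_slope.1 hg).mono_left (nhdsLT_le_nhdsNE t₀)).eventually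
      (eventually_gt_nhds hc) |>.and (Ioo_mem_nhdsLT hl)).exists
  rw [slope_comm] at hcu
  obtain ⟨v, hcv, hv⟩ : ∃ v, c < slope g u v ∧ v ∈ Ioo u t₀ :=
    (((continuousAt_slope hg.continuousAt hu.2.ne).mono_left nhdsWithin_le_nhds).eventually
      (eventually_gt_nhds hcu) |>.and (Ioo_mem_nhdsLT hu.2)).exists
  exact ⟨u, v, hu.1, hv.1, hv.2, hcv⟩

theorem HasDerivAt.exists_slope_lt_of_lt_right {g : ℝ → ℝ} {g' t₀ c r : ℝ}
    (hg : HasDerivAt g g' t₀) (hc : g' < c) (hr : t₀ < r) :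
    ∃ u v, t₀ < u ∧ u < v ∧ v < r ∧ slope g u v < c := by
  obtain ⟨v, hcv, hv⟩ : ∃ v, slope g t₀ v < c ∧ v ∈ Ioo t₀ r :=
    (((hasDerivAt_iff_tendsto_slope.1 hg).mono_left (nhdsGT_le_nhdsNE t₀)).eventually
      (eventually_lt_nhds hc) |>.and (Ioo_mem_nhdsGT hr)).exists
  rw [slope_comm] at hcv
  obtain ⟨u, hcu, hu⟩ : ∃ u, slope g v u < c ∧ u ∈ Ioo t₀ v :=
    (((continuousAt_slope hg.continuousAt hv.1.ne').mono_left nhdsWithin_le_nhds).eventually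
      (eventually_lt_nhds hcv) |>.and (Ioo_mem_nhdsGT hv.1)).exists
  exact ⟨u, v, hu.1, hu.2, hv.2, by rwa [slope_comm]⟩

theorem Filter.Tendsto.slope {ι : Type*} {l : Filter ι} {f : ι → ℝ → ℝ} {g : ℝ → ℝ}
    {u v : ℝ}
    (hu : Tendsto (fun i => f i u) l (𝓝 (g u))) (hv : Tendsto (fun i => f i v) l (𝓝 (g v))) :
    Tendsto (fun i => slope (f i) u v) l (𝓝 (slope g u v)) := by
  simpa only [slope_def_field] using (hv.sub hu).div_const (v - u)

section LimitOfConvex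

variable {ι : Type*} {l : Filter ι} {a b : ℝ} {f : ι → ℝ → ℝ} {g : ℝ → ℝ} {t : ι → ℝ}
  {t₀ : ℝ} {f' : ι → ℝ} {g' : ℝ}
  (hconv : ∀ i, ConvexOn ℝ (Ioo a b) (f i))
  (hptwise : ∀ x ∈ Ioo a b, Tendsto (fun i => f i x) l (𝓝 (g x)))
  (ht : ∀ i, t i ∈ Ioo a b) (ht₀ : t₀ ∈ Ioo a b) (htt : Tendsto t l (𝓝 t₀))
  (hf : ∀ i, HasDerivAt (f i) (f' i) (t i)) (hg : HasDerivAt g g' t₀)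
include hconv hptwise ht ht₀ htt hf hg

theorem eventually_lt_deriv_of_convexOn_of_lt {c : ℝ} (hc : c < g') :
    ∀ᶠ i in l, c < f' i := by
  obtain ⟨u, v, hau, huv, hvt, hcuv⟩ := hg.exists_lt_slope_of_lt_left hc ht₀.1
  have hu : u ∈ Ioo a b := ⟨hau, by linarith [ht₀.2]⟩
  have hv : v ∈ Ioo a b := ⟨by linarith, by linarith [ht₀.2]⟩
  filter_upwards [htt.eventually (eventually_gt_nhds hvt),
      ((hptwise u hu).slope (hptwise v hv)).eventually (eventually_gt_nhds hcuv)]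
    with i hvti hci
  exact hci.trans_le ((hconv i).slope_le_of_hasDerivAt_of_lt hu (ht i) huv hvti (hf i))

theorem eventually_deriv_lt_of_convexOn_of_lt {c : ℝ} (hc : g' < c) :
    ∀ᶠ i in l, f' i < c := by
  obtain ⟨u, v, htu, huv, hvb, hcuv⟩ := hg.exists_slope_lt_of_lt_right hc ht₀.2
  have hu : u ∈ Ioo a b := ⟨by linarith [ht₀.1], by linarith⟩
  have hv : v ∈ Ioo a b := ⟨by linarith [ht₀.1], hvb⟩
  filter_upwards [htt.eventually (eventually_lt_nhds htu),
      ((hptwise u hu).slope (hptwise v hv)).eventually (eventually_lt_nhds hcuv)]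
    with i huti hci
  exact ((hconv i).le_slope_of_hasDerivAt_of_lt (ht i) hv huti huv (hf i)).trans_lt hci

end LimitOfConvex

/-- Ellis, Lemma V.7.5: if convex functions `f n` on an open interval `(a,b)`
converge pointwise to `f`, `t n → t₀` in `(a,b)`, each `f n` is differentiable at
`t n` and `f` is differentiable at `t₀`, then `f n ' (t n) → f'(t₀)`. -/
theorem convex_deriv_tendsto (a b : ℝ) (f : ℕ → ℝ → ℝ) (g : ℝ → ℝ)
    (hconv : ∀ n, ConvexOn ℝ (Set.Ioo a b) (f n))
    (hptwise : ∀ t ∈ Set.Ioo a b, Tendsto (fun n => f n t) atTop (nhds (g t)))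
    (t : ℕ → ℝ) (t₀ : ℝ) (ht : ∀ n, t n ∈ Set.Ioo a b) (ht₀ : t₀ ∈ Set.Ioo a b)
    (htt : Tendsto t atTop (nhds t₀))
    (f' : ℕ → ℝ) (hf : ∀ n, HasDerivAt (f n) (f' n) (t n))
    (g' : ℝ) (hg : HasDerivAt g g' t₀) :
    Tendsto f' atTop (nhds g') :=
  tendsto_order.2
    ⟨fun _ hc => eventually_lt_deriv_of_convexOn_of_lt hconv hptwise ht ht₀ htt hf hg hc,
      fun _ hc => eventually_deriv_lt_of_convexOn_of_lt hconv hptwise ht ht₀ htt hf hg hc⟩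
end

section
/- Suppose a sequence of real-valued random variables W_n satisfies: the scaled cumulant generating functions c_n(t) = (1/a_n) log E_n[exp(t W_n)] are finite for all t ∈ ℝ and converge pointwise to a finite limit c(t), where a_n → ∞. If c is differentiable at 0 with c'(0) = z₀, then W_n/a_n converges to z₀ in probability exponentially fast: for every ε > 0 there is L > 0 with P_n(|W_n/a_n - z₀| ≥ ε) ≤ e^{-a_n L} for all large n. -/
open Real Filter MeasureTheory

/-- One direction of Ellis's Theorem II.6.3: if the scaled cumulant generating
functions `c_n(t) = (1/a_n) log E_n[exp(t W_n)]` are finite for all `t`, converge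
pointwise to a finite limit `c(t)`, where `a_n → ∞`, and `c` is differentiable at
`0` with `c'(0) = z₀`, then `W_n/a_n → z₀` in probability exponentially fast:
for every `ε > 0` there is `L > 0` such that
`P_n(|W_n/a_n − z₀| ≥ ε) ≤ e^{-a_n L}` for all sufficiently large `n`. -/
theorem exponential_convergence_of_cgf
    (Ω : ℕ → Type*) [∀ n, MeasurableSpace (Ω n)]
    (μ : ∀ n, Measure (Ω n)) (hμ : ∀ n, IsProbabilityMeasure (μ n))
    (W : ∀ n, Ω n → ℝ) (hW : ∀ n, Measurable (W n))
    (a : ℕ → ℝ) (hapos : ∀ n, 0 < a n) (ha : Tendsto a atTop atTop)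
    (hint : ∀ n, ∀ t : ℝ, Integrable (fun ω => Real.exp (t * W n ω)) (μ n))
    (c : ℝ → ℝ)
    (hc : ∀ t : ℝ, Tendsto
      (fun n => (1 / a n) * Real.log (∫ ω, Real.exp (t * W n ω) ∂(μ n)))
      atTop (nhds (c t)))
    (z₀ : ℝ) (hderiv : HasDerivAt c z₀ 0) :
    ∀ ε > 0, ∃ L > 0, ∀ᶠ n in atTop,
      μ n {ω | ε ≤ |W n ω / a n - z₀|} ≤ ENNReal.ofReal (Real.exp (-(a n * L))) := by
  intro ε hε
  -- c 0 = 0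
  have hc0 : c 0 = 0 := by
    have h0 : Tendsto (fun n => (1 / a n) * Real.log (∫ ω, Real.exp ((0:ℝ) * W n ω) ∂(μ n)))
        atTop (nhds 0) := by
      have heq : ∀ n, (1 / a n) * Real.log (∫ ω, Real.exp ((0:ℝ) * W n ω) ∂(μ n)) = 0 := by
        intro n
        have := hμ n
        simp [integral_const, measure_univ]
      simpa [heq] using (tendsto_const_nhds : Tendsto (fun _ : ℕ => (0:ℝ)) atTop (nhds 0))
    exact tendsto_nhds_unique (hc 0) h0
  -- slope control near 0
  have hslope := hasDerivAt_iff_tendsto_slope.mp hderiv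
  have hev : ∀ᶠ t in nhdsWithin 0 {(0:ℝ)}ᶜ, |slope c 0 t - z₀| < ε / 2 := by
    have := Metric.tendsto_nhds.mp hslope (ε / 2) (by linarith)
    simpa [Real.dist_eq] using this
  rw [eventually_nhdsWithin_iff] at hev
  rw [Metric.eventually_nhds_iff] at hev
  obtain ⟨δ, hδ, hδ'⟩ := hev
  set s := δ / 2 with hs_def
  have hspos : 0 < s := by positivity
  have hslope_s : ∀ t : ℝ, t ≠ 0 → |t| < δ → |c t / t - z₀| < ε / 2 := by
    intro t ht htδ
    have := @hδ' t (by simpa [Real.dist_eq] using htδ) (by simpa using ht)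
    simpa [slope_def_field, hc0] using this
  have hsδ : |s| < δ := by rw [abs_of_pos hspos]; simp [hs_def]; linarith
  have hmsδ : |(-s)| < δ := by rwa [abs_neg]
  have hp := hslope_s s hspos.ne' hsδ
  have hm := hslope_s (-s) (by linarith) hmsδ
  -- c s ≤ s*(z₀ + ε/2), c (-s) ≤ -s*(z₀ - ε/2)
  have hcs : c s ≤ s * (z₀ + ε / 2) := by
    have h1 : c s / s - z₀ < ε / 2 := (abs_lt.mp hp).2
    have : c s / s < z₀ + ε / 2 := by linarith
    calc c s = (c s / s) * s := by field_simp
    _ ≤ (z₀ + ε / 2) * s := by nlinarith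
    _ = s * (z₀ + ε / 2) := by ring
  have hcms : c (-s) ≤ -s * (z₀ - ε / 2) := by
    have h1 : -(ε/2) < c (-s) / (-s) - z₀ := (abs_lt.mp hm).1
    have h2 : z₀ - ε / 2 < c (-s) / (-s) := by linarith
    have : c (-s) = (c (-s) / (-s)) * (-s) := by field_simp
    rw [this]
    nlinarith
  -- eventual bounds on c_n
  have hcsn := (hc s).eventually (eventually_le_nhds (show c s < c s + s * ε / 4 by nlinarith))
  have hcmsn := (hc (-s)).eventually
    (eventually_le_nhds (show c (-s) < c (-s) + s * ε / 4 by nlinarith))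
  have halarge := ha.eventually_ge_atTop (Real.log 2 * 8 / (s * ε))
  refine ⟨s * ε / 8, by positivity, ?_⟩
  filter_upwards [hcsn, hcmsn, halarge] with n h1 h2 h3
  have := hμ n
  have hAn := hapos n
  set cn : ℝ → ℝ := fun t => (1 / a n) * Real.log (∫ ω, Real.exp (t * W n ω) ∂(μ n)) with hcn_def
  have hmgf_pos : ∀ t : ℝ, 0 < ∫ ω, Real.exp (t * W n ω) ∂(μ n) := fun t =>
    ProbabilityTheory.mgf_pos (hint n t)
  have hmgf_eq : ∀ t : ℝ, (∫ ω, Real.exp (t * W n ω) ∂(μ n)) = Real.exp (a n * cn t) := by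
    intro t
    rw [hcn_def]
    simp only
    rw [show a n * (1 / a n * Real.log (∫ ω, Real.exp (t * W n ω) ∂(μ n)))
        = Real.log (∫ ω, Real.exp (t * W n ω) ∂(μ n)) by field_simp]
    rw [Real.exp_log (hmgf_pos t)]
  -- upper tail
  have hup : (μ n {ω | a n * (z₀ + ε) ≤ W n ω}).toReal ≤ Real.exp (-(a n * (s * ε / 4))) := by
    have := ProbabilityTheory.measure_ge_le_exp_mul_mgf (X := W n) (μ := μ n) (t := s)
      (a n * (z₀ + ε)) hspos.le (hint n s)
    refine this.trans ?_
    rw [ProbabilityTheory.mgf, hmgf_eq s, ← Real.exp_add]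
    apply Real.exp_le_exp.mpr
    have hcn_bound : cn s ≤ s * (z₀ + ε / 2) + s * ε / 4 := le_trans h1 (by linarith)
    nlinarith
  -- lower tail
  have hlo : (μ n {ω | W n ω ≤ a n * (z₀ - ε)}).toReal ≤ Real.exp (-(a n * (s * ε / 4))) := by
    have := ProbabilityTheory.measure_le_le_exp_mul_mgf (X := W n) (μ := μ n) (t := -s)
      (a n * (z₀ - ε)) (by linarith) (hint n (-s))
    refine this.trans ?_
    rw [ProbabilityTheory.mgf, hmgf_eq (-s), ← Real.exp_add]
    apply Real.exp_le_exp.mpr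
    have hcn_bound : cn (-s) ≤ -s * (z₀ - ε / 2) + s * ε / 4 := le_trans h2 (by linarith)
    nlinarith
  -- combine
  have hsub : {ω | ε ≤ |W n ω / a n - z₀|} ⊆
      {ω | a n * (z₀ + ε) ≤ W n ω} ∪ {ω | W n ω ≤ a n * (z₀ - ε)} := by
    intro ω hω
    simp only [Set.mem_setOf_eq] at hω
    rcases le_abs.mp hω with h | h
    · left
      have : z₀ + ε ≤ W n ω / a n := by linarith
      have := (le_div_iff₀ hAn).mp this
      simpa [Set.mem_setOf_eq, mul_comm] using this
    · right
      have : W n ω / a n ≤ z₀ - ε := by linarith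
      have := (div_le_iff₀ hAn).mp this
      simpa [Set.mem_setOf_eq, mul_comm] using this
  have hmeas_sum : (μ n {ω | ε ≤ |W n ω / a n - z₀|}).toReal ≤
      (μ n {ω | a n * (z₀ + ε) ≤ W n ω}).toReal + (μ n {ω | W n ω ≤ a n * (z₀ - ε)}).toReal := by
    have h1 : μ n {ω | ε ≤ |W n ω / a n - z₀|} ≤
        μ n {ω | a n * (z₀ + ε) ≤ W n ω} + μ n {ω | W n ω ≤ a n * (z₀ - ε)} :=
      le_trans (measure_mono hsub) (measure_union_le _ _)
    calc (μ n {ω | ε ≤ |W n ω / a n - z₀|}).toReal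
        ≤ (μ n {ω | a n * (z₀ + ε) ≤ W n ω} + μ n {ω | W n ω ≤ a n * (z₀ - ε)}).toReal :=
          ENNReal.toReal_mono (by finiteness) h1
      _ = _ := ENNReal.toReal_add (measure_ne_top _ _) (measure_ne_top _ _)
  have hfinal : (μ n {ω | ε ≤ |W n ω / a n - z₀|}).toReal ≤ Real.exp (-(a n * (s * ε / 8))) := by
    have h2exp : 2 * Real.exp (-(a n * (s * ε / 4))) ≤ Real.exp (-(a n * (s * ε / 8))) := by
      rw [show (2:ℝ) = Real.exp (Real.log 2) from (Real.exp_log (by norm_num)).symm,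
        ← Real.exp_add]
      apply Real.exp_le_exp.mpr
      have : Real.log 2 * 8 / (s * ε) * (s * ε) ≤ a n * (s * ε) := by
        apply mul_le_mul_of_nonneg_right h3 (by positivity)
      rw [div_mul_cancel₀ _ (by positivity : s * ε ≠ 0)] at this
      nlinarith
    linarith [hup, hlo]
  calc μ n {ω | ε ≤ |W n ω / a n - z₀|}
      = ENNReal.ofReal (μ n {ω | ε ≤ |W n ω / a n - z₀|}).toReal :=
        (ENNReal.ofReal_toReal (measure_ne_top _ _)).symm
    _ ≤ ENNReal.ofReal (Real.exp (-(a n * (s * ε / 8)))) := ENNReal.ofReal_le_ofReal hfinal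
end

section
/- For the Ising model on the 2-regular configuration model, the quenched pressure converges in probability to the one-dimensional Ising pressure: ψ_N(β,B) = (1/N) log Z_N(β,B) → log λ₊(β,B), where λ₊(β,B) = e^β(cosh(B) + √(sinh²(B) + e^{-4β})). -/
/-!
Each cycle of length `L` contributes `λ₊^L + λ₋^L ∈ [λ₊^L, 2 λ₊^L]` to `Z_N`, because
`0 ≤ λ₋ ≤ λ₊` for `β ≥ 0`. Since the cycle lengths add up to `N`, this gives
`λ₊^N ≤ Z_N ≤ 2^{K_N} λ₊^N`, hence `|ψ_N - log λ₊| ≤ (K_N / N) log 2`, and the right-hand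
side tends to `0` in probability.
-/

open Real Finset Filter MeasureTheory

lemma lamP_pos (β B : ℝ) : 0 < lamP β B := by
  unfold lamP
  have := Real.cosh_pos B
  positivity

lemma lamM_nonneg {β : ℝ} (hβ : 0 ≤ β) (B : ℝ) : 0 ≤ lamM β B := by
  have hexp : Real.exp (-4 * β) ≤ 1 := Real.exp_le_one_iff.mpr (by linarith)
  have hsqrt : Real.sqrt (Real.sinh B ^ 2 + Real.exp (-4 * β)) ≤ Real.cosh B :=
    Real.sqrt_le_iff.mpr ⟨(Real.cosh_pos B).le, by nlinarith [Real.cosh_sq B]⟩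
  unfold lamM
  exact mul_nonneg (Real.exp_pos β).le (sub_nonneg.mpr hsqrt)

lemma lamM_le_lamP (β B : ℝ) : lamM β B ≤ lamP β B := by
  unfold lamM lamP
  gcongr
  linarith [Real.sqrt_nonneg (Real.sinh B ^ 2 + Real.exp (-4 * β))]

section CycleProduct

variable {ι : Type*} (s : Finset ι) (L : ι → ℕ) {a b : ℝ}

lemma pow_sum_le_prod_pow_add_pow (ha : 0 ≤ a) (hb : 0 ≤ b) :
    a ^ (∑ i ∈ s, L i) ≤ ∏ i ∈ s, (a ^ L i + b ^ L i) := by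
  rw [← prod_pow_eq_pow_sum]
  exact prod_le_prod (fun i _ => by positivity)
    (fun i _ => le_add_of_nonneg_right (by positivity))

lemma prod_pow_add_pow_le (hb : 0 ≤ b) (hba : b ≤ a) :
    ∏ i ∈ s, (a ^ L i + b ^ L i) ≤ 2 ^ #s * a ^ (∑ i ∈ s, L i) := by
  have ha : 0 ≤ a := hb.trans hba
  calc ∏ i ∈ s, (a ^ L i + b ^ L i)
      ≤ ∏ i ∈ s, 2 * a ^ L i :=
        prod_le_prod (fun i _ => by positivity) fun i _ => by
          linarith [pow_le_pow_left₀ hb hba (L i)]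
    _ = 2 ^ #s * a ^ (∑ i ∈ s, L i) := by
        rw [prod_mul_distrib, prod_const, prod_pow_eq_pow_sum]

end CycleProduct

lemma abs_inv_mul_log_sub_log_le {a c Z : ℝ} {N : ℕ} (hN : 0 < N) (ha : 0 < a)
    (hlow : a ^ N ≤ Z) (hup : Z ≤ c * a ^ N) :
    |(1 / (N : ℝ)) * Real.log Z - Real.log a| ≤ Real.log c / N := by
  have hNR : (0 : ℝ) < N := Nat.cast_pos.mpr hN
  have haN : 0 < a ^ N := pow_pos ha N
  have hc : 0 < c := pos_of_mul_pos_left (haN.trans_le (hlow.trans hup)) haN.le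
  have hlog_low : N * Real.log a ≤ Real.log Z := by
    simpa only [Real.log_pow] using Real.log_le_log haN hlow
  have hlog_up : Real.log Z ≤ Real.log c + N * Real.log a := by
    simpa only [Real.log_mul hc.ne' haN.ne', Real.log_pow] using
      Real.log_le_log (haN.trans_le hlow) hup
  have hdiff : (1 / (N : ℝ)) * Real.log Z - Real.log a = (Real.log Z - N * Real.log a) / N := by
    field_simp
  rw [hdiff, abs_div, abs_of_nonneg (sub_nonneg.mpr hlog_low), abs_of_pos hNR]
  gcongr
  linarith

lemma tendsto_measure_le_of_le_mul {Ω : ℕ → Type*} [∀ N, MeasurableSpace (Ω N)]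
    (μ : ∀ N, Measure (Ω N)) {X Y : ∀ N, Ω N → ℝ} {c : ℝ} (hc : 0 < c)
    (hXY : ∀ᶠ N in atTop, ∀ ω, X N ω ≤ c * Y N ω)
    (hY : ∀ ε > 0, Tendsto (fun N => μ N {ω | ε ≤ Y N ω}) atTop (nhds 0)) :
    ∀ ε > 0, Tendsto (fun N => μ N {ω | ε ≤ X N ω}) atTop (nhds 0) := by
  intro ε hε
  refine tendsto_of_tendsto_of_tendsto_of_le_of_le' tendsto_const_nhds
    (hY (ε / c) (div_pos hε hc)) (Eventually.of_forall fun N => zero_le) ?_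
  filter_upwards [hXY] with N hN
  refine measure_mono fun ω (hω : ε ≤ X N ω) => ?_
  show ε / c ≤ Y N ω
  rw [div_le_iff₀ hc]
  linarith [hN ω]

theorem cm2_pressure_convergence_general (β B : ℝ) (hβ : 0 < β)
    (Ω : ℕ → Type*) [∀ N, MeasurableSpace (Ω N)]
    (μ : ∀ N, Measure (Ω N))
    (K : ∀ N : ℕ, Ω N → ℕ)
    (L : ∀ N : ℕ, Ω N → ℕ → ℕ)
    (hsum : ∀ N : ℕ, ∀ ω, ∑ i ∈ Finset.range (K N ω), L N ω i = N)
    (hK : ∀ ε > 0, Tendsto (fun N : ℕ => μ N {ω | ε ≤ (K N ω : ℝ) / N})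
      atTop (nhds 0)) :
    ∀ ε > 0, Tendsto (fun N : ℕ =>
        μ N {ω | ε ≤ |(1 / (N : ℝ)) * Real.log
            (∏ i ∈ Finset.range (K N ω), (lamP β B ^ L N ω i + lamM β B ^ L N ω i))
          - Real.log (lamP β B)|}) atTop (nhds 0) := by
  refine tendsto_measure_le_of_le_mul μ (Real.log_pos one_lt_two) ?_ hK
  filter_upwards [eventually_gt_atTop 0] with N hN ω
  have hb := lamM_nonneg hβ.le B
  have hba := lamM_le_lamP β B
  have hbound := abs_inv_mul_log_sub_log_le hN (lamP_pos β B)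
    (hsum N ω ▸ pow_sum_le_prod_pow_add_pow _ (L N ω) (lamP_pos β B).le hb)
    (hsum N ω ▸ prod_pow_add_pow_le _ (L N ω) hb hba)
  rw [card_range, Real.log_pow, mul_div_right_comm] at hbound
  exact hbound.trans_eq (mul_comm _ _)

/-- For the Ising model on `CM_N(2)` — a random disjoint union of `K_N` cycles
whose lengths sum to `N`, with `K_N/N → 0` in probability, and partition function
`Z_N = ∏_i (λ₊^{L(i)} + λ₋^{L(i)})` — the quenched pressure
`ψ_N(β,B) = (1/N) log Z_N(β,B)` converges in probability to `log λ₊(β,B)`. -/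
theorem cm2_pressure_convergence (β B : ℝ) (hβ : 0 < β)
    (Ω : ℕ → Type*) [∀ N, MeasurableSpace (Ω N)]
    (μ : ∀ N, Measure (Ω N)) (hμ : ∀ N, IsProbabilityMeasure (μ N))
    (K : ∀ N : ℕ, Ω N → ℕ) (hKmeas : ∀ N, Measurable (K N))
    (L : ∀ N : ℕ, Ω N → ℕ → ℕ) (hLmeas : ∀ N i, Measurable fun ω => L N ω i)
    (hsum : ∀ N : ℕ, ∀ ω, ∑ i ∈ Finset.range (K N ω), L N ω i = N)
    (hK : ∀ ε > 0, Tendsto (fun N : ℕ => μ N {ω | ε ≤ (K N ω : ℝ) / N})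
      atTop (nhds 0)) :
    ∀ ε > 0, Tendsto (fun N : ℕ =>
        μ N {ω | ε ≤ |(1 / (N : ℝ)) * Real.log
            (∏ i ∈ Finset.range (K N ω), (lamP β B ^ L N ω i + lamM β B ^ L N ω i))
          - Real.log (lamP β B)|}) atTop (nhds 0) :=
  cm2_pressure_convergence_general β B hβ Ω μ K L hsum hK
end

section
/- Let (N_ℓ)_{n₁,n₂} be the number of lines of length ℓ in the configuration model with n₁ degree-1 and n₂ degree-2 vertices, and M_{n₁,n₂}(θ) = E[exp(θ(N_ℓ - E N_ℓ))]. Then there exist constants A, ε > 0 such that M_{n₁,n₂}(θ) ≤ exp(A n₁ θ²) for all |θ| ≤ ε and all n₁ (even), n₂ ≥ 0. -/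
open Real Filter

/-- Uniform sub-Gaussian bound for the centered moment generating function
`M_{n₁,n₂}(θ) = E[exp(θ(N_ℓ − E N_ℓ))]` of the number `N_ℓ` of lines of length
`ℓ` in the configuration model with `n₁` degree-1 and `n₂` degree-2 vertices.
The configuration-model structure is encoded by the line-removal recursion:
`M_{n₁,n₂}(θ) = ∑_{k} M_{n₁-2,n₂-k+2}(θ) p_{n₁,n₂}(k) [1_{k≠ℓ} + 1_{k=ℓ}e^θ]
e^{-θ p_{n₁,n₂}(ℓ)}`, where `p_{n₁,n₂}(k)` is the probability that the first line
has length `k`. Conclusion: there exist constants `A, ε > 0` such that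
`M_{n₁,n₂}(θ) ≤ exp(A n₁ θ²)` for all `|θ| ≤ ε`, all even `n₁` and all `n₂ ≥ 0`. -/
theorem lines_mgf_subgaussian (ℓ : ℕ)
    (M : ℕ → ℕ → ℝ → ℝ) (pr : ℕ → ℕ → ℕ → ℝ)
    (hpr_nonneg : ∀ n1 n2 k, 0 ≤ pr n1 n2 k)
    (hpr_le_one : ∀ n1 n2 k, pr n1 n2 k ≤ 1)
    (hpr_supp : ∀ n1 n2 k, k < 2 → pr n1 n2 k = 0)
    (hpr_sum : ∀ n1 n2 : ℕ, 2 ≤ n1 → (∑' k : ℕ, pr n1 n2 k) = 1)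
    (hM_nonneg : ∀ n1 n2 θ, 0 ≤ M n1 n2 θ)
    (hM_base : ∀ n2 θ, M 0 n2 θ = 1)
    (hM_rec : ∀ n1 n2 : ℕ, 2 ≤ n1 → ∀ θ : ℝ,
      M n1 n2 θ = ∑' k : ℕ,
        M (n1 - 2) (n2 - k + 2) θ * pr n1 n2 k
          * (if k = ℓ then Real.exp θ else 1)
          * Real.exp (-θ * pr n1 n2 ℓ)) :
    ∃ A > (0 : ℝ), ∃ ε > (0 : ℝ), ∀ n1 n2 : ℕ, Even n1 → ∀ θ : ℝ, |θ| ≤ ε →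
      M n1 n2 θ ≤ Real.exp (A * n1 * θ ^ 2) := by

  refine ⟨1/2, by norm_num, 1, by norm_num, ?_⟩
  have key : ∀ j : ℕ, ∀ n2 : ℕ, ∀ θ : ℝ, |θ| ≤ 1 →
      M (2*j) n2 θ ≤ Real.exp ((1/2) * (2*j) * θ^2) := by
    intro j
    induction j with
    | zero => intro n2 θ _; simp [hM_base]
    | succ j ih =>
      intro n2 θ hθ
      have hn1 : 2 ≤ 2*(j+1) := by omega
      set n1 := 2*(j+1) with hn1def
      have hθ2 : θ^2 ≤ 1 := by
        have := abs_le.mp hθ; nlinarith [this.1, this.2]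
      have hexpq : Real.exp θ ≤ 1 + θ + θ^2 := by
        have hb := Real.exp_bound hθ (n := 2) (by norm_num)
        have hsum : (∑ i ∈ Finset.range 2, θ ^ i / (Nat.factorial i : ℝ)) = 1 + θ := by
          simp [Finset.sum_range_succ, Nat.factorial]
        rw [hsum] at hb
        have := (abs_le.mp hb).2
        have hsqa : |θ|^2 = θ^2 := sq_abs θ
        norm_num at this
        nlinarith [sq_abs θ]
      set p := pr n1 n2 ℓ with hp
      have hp0 : 0 ≤ p := hpr_nonneg _ _ _
      have hp1 : p ≤ 1 := hpr_le_one _ _ _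
      set E := Real.exp (-θ * p) with hE
      have hE0 : (0:ℝ) < E := Real.exp_pos _
      set C := Real.exp ((1/2) * (2*j) * θ^2) with hC
      have hC0 : (0:ℝ) < C := Real.exp_pos _
      have hprsum : Summable (fun k => pr n1 n2 k) := by
        by_contra h
        have h0 := tsum_eq_zero_of_not_summable h
        rw [hpr_sum n1 n2 hn1] at h0; norm_num at h0
      set w : ℕ → ℝ := fun k => if k = ℓ then Real.exp θ else 1 with hw
      have hw0 : ∀ k, 0 < w k := by
        intro k; by_cases h : k = ℓ <;> simp [hw, h] <;> positivity
      have hdsum : Summable (fun k => if k = ℓ then p * (Real.exp θ - 1) else 0) := by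
        apply summable_of_ne_finset_zero (s := {ℓ})
        intro b hb; simp at hb; simp [hb]
      have hpw_eq : ∀ k, pr n1 n2 k * w k
          = pr n1 n2 k + (if k = ℓ then p * (Real.exp θ - 1) else 0) := by
        intro k; simp only [hw]
        by_cases h : k = ℓ
        · rw [if_pos h, if_pos h, h, ← hp]; ring
        · rw [if_neg h, if_neg h]; ring
      have hpwsum : Summable (fun k => pr n1 n2 k * w k) := by
        have := hprsum.add hdsum
        apply this.congr
        intro k; exact (hpw_eq k).symm
      have htsum_pw : (∑' k, pr n1 n2 k * w k) = 1 + p * (Real.exp θ - 1) := by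
        calc (∑' k, pr n1 n2 k * w k)
            = ∑' k, (pr n1 n2 k + if k = ℓ then p * (Real.exp θ - 1) else 0) :=
              tsum_congr hpw_eq
          _ = (∑' k, pr n1 n2 k) + ∑' k, (if k = ℓ then p * (Real.exp θ - 1) else 0) :=
              Summable.tsum_add hprsum hdsum
          _ = 1 + p * (Real.exp θ - 1) := by rw [hpr_sum n1 n2 hn1, tsum_ite_eq]
      have hM2 : ∀ k : ℕ, M (n1 - 2) (n2 - k + 2) θ ≤ C := by
        intro k
        have h2 : n1 - 2 = 2*j := by omega
        rw [h2]; exact ih (n2 - k + 2) θ hθ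
      have hpoint : ∀ k : ℕ,
          M (n1 - 2) (n2 - k + 2) θ * pr n1 n2 k * (if k = ℓ then Real.exp θ else 1)
            * Real.exp (-θ * pr n1 n2 ℓ) ≤ C * E * (pr n1 n2 k * w k) := by
        intro k
        have h1 : M (n1 - 2) (n2 - k + 2) θ * pr n1 n2 k * w k * E
            ≤ C * pr n1 n2 k * w k * E := by
          have := hM2 k
          have hnn : 0 ≤ pr n1 n2 k * w k * E :=
            mul_nonneg (mul_nonneg (hpr_nonneg _ _ _) (hw0 k).le) hE0.le
          calc M (n1 - 2) (n2 - k + 2) θ * pr n1 n2 k * w k * E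
              = M (n1 - 2) (n2 - k + 2) θ * (pr n1 n2 k * w k * E) := by ring
            _ ≤ C * (pr n1 n2 k * w k * E) := mul_le_mul_of_nonneg_right this hnn
            _ = C * pr n1 n2 k * w k * E := by ring
        calc M (n1 - 2) (n2 - k + 2) θ * pr n1 n2 k * (if k = ℓ then Real.exp θ else 1)
              * Real.exp (-θ * pr n1 n2 ℓ)
            = M (n1 - 2) (n2 - k + 2) θ * pr n1 n2 k * w k * E := rfl
          _ ≤ C * pr n1 n2 k * w k * E := h1
          _ = C * E * (pr n1 n2 k * w k) := by ring
      have hgsum : Summable (fun k => C * E * (pr n1 n2 k * w k)) := hpwsum.mul_left _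
      have hfnn : ∀ k : ℕ, 0 ≤ M (n1 - 2) (n2 - k + 2) θ * pr n1 n2 k
          * (if k = ℓ then Real.exp θ else 1) * Real.exp (-θ * pr n1 n2 ℓ) := by
        intro k
        have hwk : (0:ℝ) ≤ (if k = ℓ then Real.exp θ else 1) := (hw0 k).le
        exact mul_nonneg (mul_nonneg (mul_nonneg (hM_nonneg _ _ _) (hpr_nonneg _ _ _)) hwk)
          (Real.exp_pos _).le
      have hfsum : Summable (fun k => M (n1 - 2) (n2 - k + 2) θ * pr n1 n2 k
          * (if k = ℓ then Real.exp θ else 1) * Real.exp (-θ * pr n1 n2 ℓ)) :=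
        Summable.of_nonneg_of_le hfnn hpoint hgsum
      have hts := Summable.tsum_le_tsum hpoint hfsum hgsum
      have hscalar : E * (1 + p * (Real.exp θ - 1)) ≤ Real.exp (θ^2) := by
        have h1 : 1 + p * (Real.exp θ - 1) ≤ 1 + (p*θ + p*θ^2) := by nlinarith
        have h2 : 1 + (p*θ + p*θ^2) ≤ Real.exp (p*θ + p*θ^2) := by
          have := Real.add_one_le_exp (p*θ + p*θ^2); linarith
        have h3 : Real.exp (p*θ + p*θ^2) ≤ Real.exp (θ*p + θ^2) := by
          apply Real.exp_le_exp.mpr; nlinarith [sq_nonneg θ]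
        calc E * (1 + p * (Real.exp θ - 1))
            ≤ E * Real.exp (θ*p + θ^2) := by
              apply mul_le_mul_of_nonneg_left _ hE0.le
              linarith
          _ = Real.exp (-θ*p + (θ*p + θ^2)) := by rw [hE, ← Real.exp_add]
          _ = Real.exp (θ^2) := by ring_nf
      calc M n1 n2 θ
          = ∑' k : ℕ, M (n1 - 2) (n2 - k + 2) θ * pr n1 n2 k
              * (if k = ℓ then Real.exp θ else 1) * Real.exp (-θ * pr n1 n2 ℓ) :=
            hM_rec n1 n2 hn1 θ
        _ ≤ ∑' k : ℕ, C * E * (pr n1 n2 k * w k) := hts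
        _ = C * E * (1 + p * (Real.exp θ - 1)) := by rw [tsum_mul_left, htsum_pw]
        _ = C * (E * (1 + p * (Real.exp θ - 1))) := by ring
        _ ≤ C * Real.exp (θ^2) := by
            apply mul_le_mul_of_nonneg_left hscalar hC0.le
        _ = Real.exp ((1/2) * (2 * ((j+1 : ℕ) : ℝ)) * θ^2) := by
            rw [hC, ← Real.exp_add]; congr 1; push_cast; ring
  intro n1 n2 hev θ hθ
  obtain ⟨r, hr⟩ := hev
  have hr2 : n1 = 2*r := by omega
  subst hr2
  have := key r n2 θ hθ
  convert this using 2
  push_cast; ring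
end
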